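/- arXiv:2412.09523 — 2 statements merged into one kernel-verified Lean document; each statement's English description precedes it below -/
import Mathlib

section
/- Let μ₁,…,μ_r be bivariate absolutely continuous measures and n, m normal multi-indices. If |n| ≤ |m| − 2, then ⟨P_n, Q_m⟩_μ = 0; and if |n| = |m| − 1, then ⟨P_n, Q_m⟩_μ = 1, where P_n is the bivariate Type II MOP and Q_m the bivariate Type I function. -/
open MeasureTheory MvPolynomial

/-- The Cantor pairing function: the position of `x^t y^s` in the graded reverse
lexicographic monomial order `{1, x, y, x², xy, y², …}` (counting from 0). -/
def cpair (t s : ℕ) : ℕ := (t + s) * (t + s + 1) / 2 + s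

/-- The inverse of the Cantor pairing function. -/
def cunpair (N : ℕ) : ℕ × ℕ :=
  let d := (Nat.sqrt (8 * N + 1) - 1) / 2
  let k := N - d * (d + 1) / 2
  (d - k, k)

/-- The exponent vector of the bivariate monomial `x^a.1 * y^a.2`. -/
noncomputable def expv (a : ℕ × ℕ) : Fin 2 →₀ ℕ :=
  Finsupp.single 0 a.1 + Finsupp.single 1 a.2

/-- The position of an exponent vector in the graded reverse lexicographic order. -/
def mpos (s : Fin 2 →₀ ℕ) : ℕ := cpair (s 0) (s 1)

/-- Evaluation of a bivariate polynomial at a point of `ℝ × ℝ`. -/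
noncomputable def ev (P : MvPolynomial (Fin 2) ℝ) (p : ℝ × ℝ) : ℝ :=
  MvPolynomial.eval ![p.1, p.2] P

/-- `P` is the monic bivariate Type II multiple orthogonal polynomial for the multi-index `n`
with respect to the measures `dμ_j = w_j dμ`: its leading monomial is at position `|n|` (monic
there, all other monomials earlier in the graded reverse lexicographic order) and
`⟨P, x^t y^s⟩_j = ∫ P · x^t y^s · w_j dμ = 0` for all `0 ≤ π(t,s) ≤ n_j − 1`. -/
def IsTypeII {r : ℕ} (μ : Measure (ℝ × ℝ)) (w : Fin r → ℝ × ℝ → ℝ) (n : Fin r → ℕ)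
    (P : MvPolynomial (Fin 2) ℝ) : Prop :=
  P.coeff (expv (cunpair (∑ j, n j))) = 1 ∧
  (∀ a ∈ P.support, mpos a ≤ ∑ j, n j) ∧
  ∀ j : Fin r, ∀ t s : ℕ, cpair t s < n j →
    ∫ p : ℝ × ℝ, ev P p * (p.1 ^ t * p.2 ^ s) * w j p ∂μ = 0

/-- `A` is the vector of bivariate Type I multiple orthogonal polynomials for the multi-index
`n` with respect to the measures `dμ_j = w_j dμ`: `π(mdeg A_j) ≤ n_j − 1` and
`Σ_j ⟨A_j, x^t y^s⟩_j` equals `0` for `0 ≤ π(t,s) ≤ |n|−2` and `1` for `π(t,s) = |n|−1`. -/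
def IsTypeI {r : ℕ} (μ : Measure (ℝ × ℝ)) (w : Fin r → ℝ × ℝ → ℝ) (n : Fin r → ℕ)
    (A : Fin r → MvPolynomial (Fin 2) ℝ) : Prop :=
  (∀ j : Fin r, ∀ a ∈ (A j).support, mpos a < n j) ∧
  (∀ t s : ℕ, cpair t s + 2 ≤ ∑ j, n j →
    ∑ j : Fin r, ∫ p : ℝ × ℝ, ev (A j) p * (p.1 ^ t * p.2 ^ s) * w j p ∂μ = 0) ∧
  (∀ t s : ℕ, cpair t s + 1 = ∑ j, n j →
    ∑ j : Fin r, ∫ p : ℝ × ℝ, ev (A j) p * (p.1 ^ t * p.2 ^ s) * w j p ∂μ = 1)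

lemma two_mul_tri (d : ℕ) : 2 * (d * (d + 1) / 2) = d * (d + 1) :=
  Nat.mul_div_cancel' (Nat.even_mul_succ_self d).two_dvd

lemma cpair_eq (t s : ℕ) : 2 * cpair t s = (t + s) * (t + s + 1) + 2 * s := by
  have h := two_mul_tri (t + s)
  unfold cpair
  generalize (t + s) * (t + s + 1) = A at h ⊢
  omega

lemma cpair_lt {t s t' s' : ℕ} (h : t + s < t' + s') : cpair t s < cpair t' s' := by
  have e1 := cpair_eq t s
  have e2 := cpair_eq t' s'
  have hm : (t + s + 1) * (t + s + 2) ≤ (t' + s') * (t' + s' + 1) :=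
    Nat.mul_le_mul (by omega) (by omega)
  have hr : (t + s + 1) * (t + s + 2) = (t + s) * (t + s + 1) + 2 * (t + s) + 2 := by ring
  generalize (t + s) * (t + s + 1) = A at e1 hr
  generalize (t + s + 1) * (t + s + 2) = B at hm hr
  generalize (t' + s') * (t' + s' + 1) = C at e2 hm
  omega

lemma cpair_inj {t s t' s' : ℕ} (h : cpair t s = cpair t' s') : t = t' ∧ s = s' := by
  have hd : t + s = t' + s' := by
    rcases lt_trichotomy (t + s) (t' + s') with h' | h' | h'
    · exact absurd h (cpair_lt h').ne
    · exact h'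
    · exact absurd h.symm (cpair_lt h').ne
  have e1 := cpair_eq t s
  have e2 := cpair_eq t' s'
  rw [hd] at e1
  generalize (t' + s') * (t' + s' + 1) = A at e1 e2
  omega

lemma cpair_cunpair (N : ℕ) : cpair (cunpair N).1 (cunpair N).2 = N := by
  have hle : Nat.sqrt (8 * N + 1) * Nat.sqrt (8 * N + 1) ≤ 8 * N + 1 := Nat.sqrt_le _
  have hlt : 8 * N + 1 < (Nat.sqrt (8 * N + 1) + 1) * (Nat.sqrt (8 * N + 1) + 1) :=
    Nat.lt_succ_sqrt _
  set s := Nat.sqrt (8 * N + 1) with hs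
  have hs1 : 1 ≤ s := by
    have h1 : Nat.sqrt 1 ≤ s := Nat.sqrt_le_sqrt (by omega)
    simpa using h1
  set d := (s - 1) / 2 with hd
  have hsd1 : 2 * d + 1 ≤ s := by omega
  have hsd2 : s ≤ 2 * d + 2 := by omega
  have h1 : (2 * d + 1) * (2 * d + 1) ≤ s * s := Nat.mul_le_mul hsd1 hsd1
  have h2 : (s + 1) * (s + 1) ≤ (2 * d + 3) * (2 * d + 3) :=
    Nat.mul_le_mul (by omega) (by omega)
  have e1 : (2 * d + 1) * (2 * d + 1) = 4 * (d * (d + 1)) + 1 := by ring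
  have e2 : (2 * d + 3) * (2 * d + 3) = 4 * (d * (d + 1)) + 8 * d + 9 := by ring
  have htri := two_mul_tri d
  show cpair (d - (N - d * (d + 1) / 2)) (N - d * (d + 1) / 2) = N
  have hk : N - d * (d + 1) / 2 ≤ d := by
    generalize d * (d + 1) = A at e1 e2 htri ⊢
    omega
  unfold cpair
  rw [Nat.sub_add_cancel hk]
  generalize d * (d + 1) = A at e1 e2 htri ⊢
  omega






lemma expv_apply0 (a : ℕ × ℕ) : expv a 0 = a.1 := by
  simp [expv, Finsupp.single_apply]

lemma expv_apply1 (a : ℕ × ℕ) : expv a 1 = a.2 := by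
  simp [expv, Finsupp.single_apply]

lemma fin2_eq (a : Fin 2 →₀ ℕ) : a = expv (a 0, a 1) := by
  ext i
  fin_cases i
  · simp [expv_apply0]
  · simp [expv_apply1]

lemma ev_eq (P : MvPolynomial (Fin 2) ℝ) (p : ℝ × ℝ) :
    ev P p = ∑ a ∈ P.support, P.coeff a * (p.1 ^ a 0 * p.2 ^ a 1) := by
  rw [ev, MvPolynomial.eval_eq']
  refine Finset.sum_congr rfl fun a _ => ?_
  rw [Fin.prod_univ_two]
  simp


/-- Biorthogonality, remaining cases: if `|n| ≤ |m| − 2` then `⟨P_n, Q_m⟩_μ = 0`, and if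
`|n| = |m| − 1` then `⟨P_n, Q_m⟩_μ = 1`, where `P_n` is the bivariate Type II MOP for `n`
and `Q_m` is the bivariate Type I function for `m` (satisfying `⟨Q_m, x^t y^s⟩_μ = 0` for
`π(t,s) ≤ |m| − 2` and `= 1` for `π(t,s) = |m| − 1`). -/
theorem biorthogonality_modulus {r : ℕ} (μ : Measure (ℝ × ℝ)) (w : Fin r → ℝ × ℝ → ℝ)
    (n m : Fin r → ℕ) (Pn : MvPolynomial (Fin 2) ℝ) (Q : ℝ × ℝ → ℝ)
    (hP : IsTypeII μ w n Pn)
    (hQ0 : ∀ t s : ℕ, cpair t s + 2 ≤ ∑ j, m j →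
      ∫ p : ℝ × ℝ, Q p * (p.1 ^ t * p.2 ^ s) ∂μ = 0)
    (hQ1 : ∀ t s : ℕ, cpair t s + 1 = ∑ j, m j →
      ∫ p : ℝ × ℝ, Q p * (p.1 ^ t * p.2 ^ s) ∂μ = 1)
    (hint : ∀ t s : ℕ, Integrable (fun p : ℝ × ℝ => Q p * (p.1 ^ t * p.2 ^ s)) μ) :
    ((∑ j, n j) + 2 ≤ ∑ j, m j → ∫ p : ℝ × ℝ, ev Pn p * Q p ∂μ = 0) ∧
    ((∑ j, n j) + 1 = ∑ j, m j → ∫ p : ℝ × ℝ, ev Pn p * Q p ∂μ = 1) := by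
  
  have key : ∫ p : ℝ × ℝ, ev Pn p * Q p ∂μ =
      ∑ a ∈ Pn.support, Pn.coeff a * ∫ p : ℝ × ℝ, Q p * (p.1 ^ a 0 * p.2 ^ a 1) ∂μ := by
    have h1 : ∀ p : ℝ × ℝ, ev Pn p * Q p =
        ∑ a ∈ Pn.support, Pn.coeff a * (Q p * (p.1 ^ a 0 * p.2 ^ a 1)) := by
      intro p
      rw [ev_eq, Finset.sum_mul]
      exact Finset.sum_congr rfl fun a _ => by ring
    simp only [h1]
    rw [integral_finset_sum _ (fun a _ => ((hint (a 0) (a 1)).const_mul _))]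
    exact Finset.sum_congr rfl fun a _ => integral_const_mul _ _
  obtain ⟨hmonic, hdeg, _⟩ := hP
  constructor
  · intro h
    rw [key]
    refine Finset.sum_eq_zero fun a ha => ?_
    rw [hQ0 (a 0) (a 1) (by have := hdeg a ha; unfold mpos at this; omega), mul_zero]
  · intro h
    rw [key]
    set a0 := expv (cunpair (∑ j, n j)) with ha0
    have ha0mem : a0 ∈ Pn.support := by
      rw [MvPolynomial.mem_support_iff, hmonic]
      exact one_ne_zero
    have hma0 : cpair (a0 0) (a0 1) = ∑ j, n j := by
      rw [ha0, expv_apply0, expv_apply1]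
      exact cpair_cunpair _
    rw [Finset.sum_eq_single_of_mem a0 ha0mem]
    · rw [hmonic, hQ1 (a0 0) (a0 1) (by omega), one_mul]
    · intro b hb hne
      have hlt : cpair (b 0) (b 1) < ∑ j, n j := by
        have hle := hdeg b hb
        unfold mpos at hle
        rcases lt_or_eq_of_le hle with h' | h'
        · exact h'
        · exfalso
          apply hne
          have := cpair_inj (h'.trans hma0.symm)
          rw [fin2_eq b, fin2_eq a0]
          rw [this.1, this.2]
      rw [hQ0 (b 0) (b 1) (by omega), mul_zero]
end

section
/- With the hypotheses of the Type II nearest-neighbour relation for x, if the multi-index m satisfies m ≤ (n₁−dₙ−1,…,n_r−dₙ−1) componentwise, then ⟨x P_n, Q_m⟩_μ = 0, where P_n is the bivariate Type II MOP of n, Q_m the Type I function of m, and dₙ the degree of n. -/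
open MeasureTheory MvPolynomial

lemma cpair_succ_left (t s : ℕ) : cpair (t + 1) s = cpair t s + (t + s) + 1 := by
  unfold cpair
  have h1 : (t + 1 + s) * (t + 1 + s + 1) = (t + s) * (t + s + 1) + 2 * (t + s + 1) := by ring
  have h2 : 2 ∣ (t + s) * (t + s + 1) := (Nat.even_mul_succ_self (t + s)).two_dvd
  omega

lemma cpair_key {a b mj nj d k : ℕ} (h1 : cpair a b < mj) (h2 : mj + d + 1 ≤ nj)
    (h3 : nj ≤ d * (d + 1) / 2 + k) (h4 : k ≤ d) : cpair (a + 1) b < nj := by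
  have hdeg : a + b ≤ d := by
    by_contra h
    push_neg at h
    have hlb : (d + 1) * (d + 2) / 2 ≤ cpair a b := by
      have : (d + 1) * (d + 2) ≤ (a + b) * (a + b + 1) :=
        Nat.mul_le_mul h (by omega)
      calc (d + 1) * (d + 2) / 2 ≤ (a + b) * (a + b + 1) / 2 := Nat.div_le_div_right this
        _ ≤ cpair a b := Nat.le_add_right _ _
    have e1 : (d + 1) * (d + 2) = d * (d + 1) + 2 * (d + 1) := by ring
    have e2 : 2 ∣ d * (d + 1) := (Nat.even_mul_succ_self d).two_dvd
    omega
  rw [cpair_succ_left]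
  omega

lemma ev_eq_sum (P : MvPolynomial (Fin 2) ℝ) (p : ℝ × ℝ) :
    ev P p = ∑ a ∈ P.support, P.coeff a * (p.1 ^ (a 0) * p.2 ^ (a 1)) := by
  rw [ev, MvPolynomial.eval_eq]
  refine Finset.sum_congr rfl fun a _ => ?_
  congr 1
  have hprod : ∏ i ∈ a.support, (![p.1, p.2]) i ^ a i = ∏ i : Fin 2, (![p.1, p.2]) i ^ a i :=
    Finset.prod_subset (Finset.subset_univ _)
      (fun i _ hi => by simp [Finsupp.notMem_support_iff.mp hi])
  rw [hprod, Fin.prod_univ_two]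
  simp

/-- Vanishing of the lower coefficients in the Type II nearest-neighbour relation for `x`:
if the multi-index `m` satisfies `m_j ≤ n_j − dₙ − 1` componentwise (`dₙ` being the degree of
`n`, i.e. `|n| = dₙ(dₙ+1)/2 + kₙ`, `kₙ ≤ dₙ`), then `⟨x P_n, Q_m⟩_μ = 0`, where `P_n` is the
bivariate Type II MOP of `n` and `Q_m = Σ_j A_{m,j} w_j` the Type I function of `m`. -/
theorem NNR_typeII_x_lower_coeffs_vanish {r : ℕ} (μ : Measure (ℝ × ℝ))
    (w : Fin r → ℝ × ℝ → ℝ) (n m : Fin r → ℕ) (d k : ℕ)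
    (hdk : ∑ j, n j = d * (d + 1) / 2 + k) (hk : k ≤ d)
    (hm : ∀ j, m j + d + 1 ≤ n j)
    (Pn : MvPolynomial (Fin 2) ℝ) (A : Fin r → MvPolynomial (Fin 2) ℝ)
    (hP : IsTypeII μ w n Pn) (hA : IsTypeI μ w m A)
    (hint : ∀ (j : Fin r) (t s : ℕ),
      Integrable (fun p : ℝ × ℝ => p.1 * ev Pn p * (p.1 ^ t * p.2 ^ s) * w j p) μ) :
    ∫ p : ℝ × ℝ, (p.1 * ev Pn p) * (∑ j : Fin r, ev (A j) p * w j p) ∂μ = 0 := by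
  obtain ⟨hA1, -, -⟩ := hA
  obtain ⟨-, -, hP3⟩ := hP
  have hnle : ∀ j, n j ≤ ∑ j, n j := fun j =>
    Finset.single_le_sum (fun _ _ => Nat.zero_le _) (Finset.mem_univ j)
  have key : ∀ j, ∀ a ∈ (A j).support, cpair (a 0 + 1) (a 1) < n j := by
    intro j a ha
    exact cpair_key (hA1 j a ha) (hm j) (hdk ▸ hnle j) hk
  have hfj : ∀ j : Fin r, (fun p : ℝ × ℝ => (p.1 * ev Pn p) * (ev (A j) p * w j p)) =
      fun p => ∑ a ∈ (A j).support,
        (A j).coeff a * (p.1 * ev Pn p * (p.1 ^ (a 0) * p.2 ^ (a 1)) * w j p) := by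
    intro j
    funext p
    rw [ev_eq_sum (A j) p, Finset.sum_mul, Finset.mul_sum]
    exact Finset.sum_congr rfl fun a _ => by ring
  have hintj : ∀ j : Fin r,
      Integrable (fun p : ℝ × ℝ => (p.1 * ev Pn p) * (ev (A j) p * w j p)) μ := by
    intro j
    rw [hfj j]
    exact integrable_finset_sum _ fun a _ => ((hint j (a 0) (a 1)).const_mul _)
  have hstep : (fun p : ℝ × ℝ => (p.1 * ev Pn p) * (∑ j : Fin r, ev (A j) p * w j p)) =
      fun p => ∑ j : Fin r, (p.1 * ev Pn p) * (ev (A j) p * w j p) := by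
    funext p; rw [Finset.mul_sum]
  rw [hstep, integral_finset_sum _ fun j _ => hintj j]
  refine Finset.sum_eq_zero fun j _ => ?_
  rw [hfj j, integral_finset_sum _ fun a _ => ((hint j (a 0) (a 1)).const_mul _)]
  refine Finset.sum_eq_zero fun a ha => ?_
  rw [MeasureTheory.integral_const_mul]
  have : (fun p : ℝ × ℝ => p.1 * ev Pn p * (p.1 ^ (a 0) * p.2 ^ (a 1)) * w j p) =
      fun p => ev Pn p * (p.1 ^ (a 0 + 1) * p.2 ^ (a 1)) * w j p := by
    funext p; ring
  rw [this, hP3 j _ _ (key j a ha), mul_zero]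
end
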